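/- Let r ≥ 1 and f, g ∈ M_r(ℂ)[Z] be matrix polynomials. Define P_f(x, y₁) = det(y₁ I − f(xI)) ∈ ℂ[x, y₁] and T_{f,g}(y₁, y₂) = Res_x(P_f(x, y₁), y₂ − det(g(xI))) ∈ ℂ[y₁, y₂], the resultant with respect to x. If every eigenvalue of f(xI), as an element of an algebraic closure of ℂ(x), is multiplicatively independent of det(g(xI)), then T_{f,g}(y₁, y₂) has no factor of the form y₁^i y₂^j − ρ or y₁^i − ρ y₂^j for nonnegative integers i, j not both zero and a root of unity ρ. -/

import Mathlib

open Polynomial Matrix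

/-- The Sylvester matrix of two polynomials `p, q` over a commutative ring: an
`(n + m) × (n + m)` matrix, where `m = deg p` and `n = deg q`, whose first `n` rows are
the shifted coefficient sequences of `p` and whose last `m` rows are the shifted
coefficient sequences of `q`. -/
noncomputable def sylvester {R : Type*} [CommRing R] (p q : Polynomial R) :
    Matrix (Fin (q.natDegree + p.natDegree)) (Fin (q.natDegree + p.natDegree)) R :=
  Matrix.of fun i j =>
    if (i : ℕ) < q.natDegree then
      (if (j : ℕ) ≤ (i : ℕ) + p.natDegree then p.coeff (p.natDegree + i - j) else 0)
    else
      (if (j : ℕ) ≤ ((i : ℕ) - q.natDegree) + q.natDegree then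
        q.coeff (q.natDegree + ((i : ℕ) - q.natDegree) - j) else 0)

/-- The resultant of two polynomials: the determinant of their Sylvester matrix. -/
noncomputable def resultant {R : Type*} [CommRing R] (p q : Polynomial R) : R :=
  (_root_.sylvester p q).det

/-- `P_f(x, y₁) = det(y₁ I − f(xI))`, regarded as a polynomial in `x` whose coefficients
are polynomials in the variables `y₁ = X 0`, `y₂ = X 1`. -/
noncomputable def Pmat {r : ℕ} (f : Polynomial (Matrix (Fin r) (Fin r) ℂ)) (v : Fin 2) :
    Polynomial (MvPolynomial (Fin 2) ℂ) :=
  (Polynomial.C (MvPolynomial.X v : MvPolynomial (Fin 2) ℂ) •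
      (1 : Matrix (Fin r) (Fin r) (Polynomial (MvPolynomial (Fin 2) ℂ))) -
    (matPolyEquiv.symm f).map (Polynomial.map (MvPolynomial.C))).det

/-- `R_{f,g}(y₁, y₂) = Res_x(P_f(x, y₁), P_g(x, y₂)) ∈ ℂ[y₁, y₂]`. -/
noncomputable def Rres {r : ℕ} (f g : Polynomial (Matrix (Fin r) (Fin r) ℂ)) :
    MvPolynomial (Fin 2) ℂ :=
  _root_.resultant (Pmat f 0) (Pmat g 1)

/-- `T_{f,g}(y₁, y₂) = Res_x(P_f(x, y₁), y₂ − det(g(xI))) ∈ ℂ[y₁, y₂]`. -/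
noncomputable def Tres {r : ℕ} (f g : Polynomial (Matrix (Fin r) (Fin r) ℂ)) :
    MvPolynomial (Fin 2) ℂ :=
  _root_.resultant (Pmat f 0)
    (Polynomial.C (MvPolynomial.X 1 : MvPolynomial (Fin 2) ℂ) -
      ((matPolyEquiv.symm g).det).map (MvPolynomial.C))

/-- The natural map from `ℂ[x]` into an algebraic closure of `ℂ(x)`. -/
noncomputable def toClosure : Polynomial ℂ →+* AlgebraicClosure (RatFunc ℂ) :=
  (algebraMap (RatFunc ℂ) (AlgebraicClosure (RatFunc ℂ))).comp
    (algebraMap (Polynomial ℂ) (RatFunc ℂ))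

/-!
If `Φ` divides `T_{f,g}`, then `T_{f,g}` vanishes at every zero `(a, b)` of `Φ` in an algebraic
closure `Ω` of `ℂ(x)`. Since `Ω` is algebraically closed and contains the transcendental `x`, `Φ`
has a zero with `b ≠ 0` and `a` or `b` transcendental over `ℂ`; raising `a^i b^{±j} = ρ` to a
power `k` with `ρ^k = 1` gives the multiplicative relation `a^{ik} b^{±jk} = 1`.

When `D = det(g(xI))` is nonconstant, `T(a, b) = 0` gives a common root `x₀` of `P_f(x, a)` and
`b − D(x)`. If `x₀` is transcendental, a field embedding `Ω → Ω` over `x ↦ x₀` carries some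
eigenvalue `μ` of `f(xI)` to `a` and `D` to `b`, so `μ^{ik} D^{±jk} = 1`, against independence.
If `x₀ ∈ ℂ`, then `a` and `b` are algebraic over `ℂ`, against the choice of `(a, b)`. When `D`
is a constant `d`, `T = (y₂ − d)^{deg P_f}` forces `b = d`; the relation then either reads
`d^{±jk} = 1`, against independence, or makes `a` algebraic over `ℂ` as well.
-/

local notation "Ω" => AlgebraicClosure (RatFunc ℂ)

theorem sylvester_eq_transpose_reindex {R : Type*} [CommRing R] (p q : R[X]) :
    _root_.sylvester p q = ((Polynomial.sylvester p q p.natDegree q.natDegree).reindex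
      (Fin.revPerm.trans (finCongr (add_comm _ _)))
      (Fin.revPerm.trans (finCongr (add_comm _ _))))ᵀ := by
  ext i j
  simp only [_root_.sylvester, Polynomial.sylvester, Matrix.transpose_apply, Matrix.reindex_apply,
    Matrix.submatrix_apply, Matrix.of_apply, Fin.addCases, Equiv.symm_trans_apply, finCongr_symm,
    finCongr_apply, Fin.revPerm_symm, Fin.revPerm_apply, Set.mem_Icc, Fin.val_rev, Fin.val_cast,
    Fin.val_castLT, Fin.val_subNat, eq_rec_constant]
  split_ifs <;> first
    | rfl
    | omega
    | (congr 1; omega)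
    | rw [coeff_eq_zero_of_natDegree_lt (by omega)]

theorem resultant_eq_polynomial_resultant {R : Type*} [CommRing R] (p q : R[X]) :
    _root_.resultant p q = Polynomial.resultant p q := by
  rw [_root_.resultant, sylvester_eq_transpose_reindex, Matrix.det_transpose,
    Matrix.det_reindex_self, Polynomial.resultant]

theorem exists_eval_eq_zero_of_resultant_eq_zero {K : Type*} [Field K] [IsAlgClosed K]
    {p q : K[X]} {m : ℕ} (hp : p.natDegree ≤ m) (hq : q ≠ 0)
    (h : Polynomial.resultant p q m q.natDegree = 0) : ∃ x, p.eval x = 0 ∧ q.eval x = 0 := by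
  rw [resultant_comm, resultant_eq_prod_eval q p m hp (IsAlgClosed.splits q)] at h
  simpa [hq, Multiset.prod_eq_zero_iff, and_comm] using h

theorem natDegree_C_sub_map {R S : Type*} [CommRing R] [CommRing S] {φ : R →+* S}
    (hφ : Function.Injective φ) (c : S) (p : R[X]) :
    (C c - p.map φ).natDegree = p.natDegree := by
  rw [← natDegree_neg, neg_sub, natDegree_sub_C, natDegree_map_eq_of_injective hφ]

theorem det_smul_one_sub_eq_eval_charpoly {R n : Type*} [CommRing R] [Fintype n] [DecidableEq n]
    (M : Matrix n n R) (t : R) : (t • 1 - M).det = M.charpoly.eval t := by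
  rw [Matrix.eval_charpoly, Matrix.scalar_apply, Matrix.smul_one_eq_diagonal]

theorem exists_det_smul_one_sub_eq_zero {K n : Type*} [Field K] [IsAlgClosed K] [Fintype n]
    [DecidableEq n] [Nonempty n] (M : Matrix n n K) : ∃ μ : K, (μ • 1 - M).det = 0 := by
  obtain ⟨μ, hμ⟩ := IsAlgClosed.exists_root M.charpoly (by
    rw [Matrix.charpoly_degree_eq_dim]
    exact_mod_cast Fintype.card_ne_zero)
  exact ⟨μ, by rwa [det_smul_one_sub_eq_eval_charpoly]⟩

theorem exists_isRoot_charpoly_of_map {K L n : Type*} [Field K] [IsAlgClosed K] [Field L]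
    [Fintype n] [DecidableEq n] (σ : K →+* L) (M : Matrix n n K) {a : L}
    (ha : (M.map σ).charpoly.IsRoot a) : ∃ μ, M.charpoly.IsRoot μ ∧ σ μ = a := by
  rw [Matrix.charpoly_map] at ha
  have hmem : a ∈ (M.charpoly.map σ).roots :=
    (mem_roots (M.charpoly_monic.map σ).ne_zero).mpr ha
  rw [(IsAlgClosed.splits M.charpoly).roots_map σ, Multiset.mem_map] at hmem
  obtain ⟨μ, hμ, rfl⟩ := hmem
  exact ⟨μ, (mem_roots M.charpoly_monic.ne_zero).mp hμ, rfl⟩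

theorem isIntegral_of_isRoot_charpoly_map {K L n : Type*} [CommRing K] [CommRing L] [Algebra K L]
    [Fintype n] [DecidableEq n] (M : Matrix n n K) {a : L}
    (ha : (M.map (algebraMap K L)).charpoly.IsRoot a) : IsIntegral K a :=
  ⟨M.charpoly, M.charpoly_monic, by rwa [Matrix.charpoly_map, IsRoot, eval_map] at ha⟩

theorem IsAlgebraic.of_zpow {K A : Type*} [CommRing K] [Field A] [Algebra K A] {a : A} {k : ℤ}
    (hk : k ≠ 0) (h : IsAlgebraic K (a ^ k)) : IsAlgebraic K a := by
  rcases Int.natAbs_eq k with hk' | hk' <;> rw [hk'] at h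
  · rw [zpow_natCast] at h
    exact h.of_pow (Int.natAbs_pos.mpr hk)
  · rw [_root_.zpow_neg, IsAlgebraic.inv_iff, zpow_natCast] at h
    exact h.of_pow (Int.natAbs_pos.mpr hk)

theorem exists_zpow_eq {K : Type*} [Field K] [IsAlgClosed K] {J : ℤ} (hJ : J ≠ 0) (c : K) :
    ∃ b : K, b ^ J = c := by
  obtain ⟨z, hz⟩ := IsAlgClosed.exists_pow_nat_eq c (Int.natAbs_pos.mpr hJ)
  rcases Int.natAbs_eq J with h | h
  · exact ⟨z, by rw [h, zpow_natCast, hz]⟩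
  · exact ⟨z⁻¹, by rw [h, _root_.zpow_neg, zpow_natCast, inv_pow, inv_inv, hz]⟩

theorem exists_pow_mul_zpow_eq {K L : Type*} [Field K] [Field L] [Algebra K L] [IsAlgClosed L]
    {x : L} (hx : Transcendental K x) {i : ℕ} {J : ℤ} (hiJ : i ≠ 0 ∨ J ≠ 0) {c : L} (hc : c ≠ 0) :
    ∃ a b : L, b ≠ 0 ∧ (Transcendental K a ∨ Transcendental K b) ∧ a ^ i * b ^ J = c := by
  have hx0 : x ≠ 0 := by
    rintro rfl
    exact hx isAlgebraic_zero
  rcases eq_or_ne i 0 with rfl | hi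
  · have hJ : J ≠ 0 := hiJ.resolve_left (not_not.mpr rfl)
    obtain ⟨b, hb⟩ := exists_zpow_eq hJ c
    refine ⟨x, b, ?_, Or.inl hx, by rw [pow_zero, one_mul, hb]⟩
    rintro rfl
    exact hc (by rw [← hb, _root_.zero_zpow _ hJ])
  · obtain ⟨a, ha⟩ := IsAlgClosed.exists_pow_nat_eq (c * (x ^ J)⁻¹) (Nat.pos_of_ne_zero hi)
    exact ⟨a, x, hx0, Or.inr hx, by rw [ha, inv_mul_cancel_right₀ (zpow_ne_zero J hx0)]⟩

theorem exists_ringHom_comp_algebraMap_eq {K S M : Type*} [Field K] [Field S] [Field M]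
    [IsAlgClosed M] [Algebra K S] [Algebra.IsAlgebraic K S] (φ : K →+* M) :
    ∃ σ : S →+* M, σ.comp (algebraMap K S) = φ :=
  let _ : Algebra K M := φ.toAlgebra
  ⟨(IsAlgClosed.lift : S →ₐ[K] M).toRingHom, RingHom.ext (IsAlgClosed.lift (M := M)).commutes⟩

theorem toClosure_C (c : ℂ) : toClosure (C c) = algebraMap ℂ Ω c := by
  rw [toClosure, RingHom.comp_apply, ← Polynomial.algebraMap_eq,
    ← IsScalarTower.algebraMap_apply, ← IsScalarTower.algebraMap_apply]

theorem transcendental_toClosure_X : Transcendental ℂ (toClosure X) := by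
  rw [toClosure, RingHom.comp_apply, RatFunc.algebraMap_X]
  exact (transcendental_algebraMap_iff (algebraMap (RatFunc ℂ) Ω).injective).mpr
    RatFunc.transcendental_X

theorem exists_ringHom_toClosure_eq_aeval {x₀ : Ω} (hx : Transcendental ℂ x₀) :
    ∃ σ : Ω →+* Ω, ∀ h : ℂ[X], σ (toClosure h) = aeval x₀ h := by
  obtain ⟨σ, hσ⟩ := exists_ringHom_comp_algebraMap_eq (S := Ω)
    (IsFractionRing.lift (K := RatFunc ℂ) (transcendental_iff_injective.mp hx))
  refine ⟨σ, fun h => ?_⟩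
  rw [toClosure, RingHom.comp_apply, ← RingHom.comp_apply σ, hσ, IsFractionRing.lift_algebraMap]
  rfl

section Tres

variable {r : ℕ} (f g : Polynomial (Matrix (Fin r) (Fin r) ℂ))

def HasEigenvalueRelation (k l : ℤ) : Prop :=
  ∃ μ : Ω, (μ • (1 : Matrix (Fin r) (Fin r) Ω) - (matPolyEquiv.symm f).map toClosure).det = 0 ∧
    μ ^ k * toClosure (matPolyEquiv.symm g).det ^ l = 1

theorem eval_map_Pmat (a b x₀ : Ω) :
    ((Pmat f 0).map (MvPolynomial.eval₂Hom (algebraMap ℂ Ω) ![a, b])).eval x₀ =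
      (a • 1 - (matPolyEquiv.symm f).map (aeval x₀)).det := by
  rw [← coe_evalRingHom, ← coe_mapRingHom, ← RingHom.comp_apply, Pmat, RingHom.map_det]
  congr 1
  ext i j
  by_cases h : i = j <;> simp [h, eval_map, aeval_def, eval₂_map]

theorem eval_Tres (a b : Ω) :
    MvPolynomial.eval₂Hom (algebraMap ℂ Ω) ![a, b] (Tres f g) =
      Polynomial.resultant ((Pmat f 0).map (MvPolynomial.eval₂Hom (algebraMap ℂ Ω) ![a, b]))
        (C b - (matPolyEquiv.symm g).det.map (algebraMap ℂ Ω))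
        (Pmat f 0).natDegree (matPolyEquiv.symm g).det.natDegree := by
  rw [Tres, resultant_eq_polynomial_resultant, natDegree_C_sub_map (MvPolynomial.C_injective _ _),
    ← resultant_map_map, Polynomial.map_sub, Polynomial.map_C, Polynomial.map_map,
    MvPolynomial.eval₂Hom_comp_C, MvPolynomial.eval₂Hom_X']
  rfl

theorem eq_toClosure_of_eval_Tres_eq_zero {a b : Ω} (hD : (matPolyEquiv.symm g).det.natDegree = 0)
    (hT : MvPolynomial.eval₂Hom (algebraMap ℂ Ω) ![a, b] (Tres f g) = 0) :
    b = toClosure (matPolyEquiv.symm g).det := by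
  rw [eval_Tres, hD, resultant_zero_right_deg] at hT
  rw [eq_C_of_natDegree_eq_zero hD, toClosure_C, ← sub_eq_zero]
  simpa using eq_zero_of_pow_eq_zero hT

theorem exists_root_of_eval_Tres_eq_zero {a b : Ω}
    (hD : (matPolyEquiv.symm g).det.natDegree ≠ 0)
    (hT : MvPolynomial.eval₂Hom (algebraMap ℂ Ω) ![a, b] (Tres f g) = 0) :
    ∃ x₀ : Ω, aeval x₀ (matPolyEquiv.symm g).det = b ∧
      (a • 1 - (matPolyEquiv.symm f).map (aeval x₀)).det = 0 := by
  have hdeg := natDegree_C_sub_map (algebraMap ℂ Ω).injective b (matPolyEquiv.symm g).det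
  rw [eval_Tres, ← hdeg] at hT
  obtain ⟨x₀, hP, hQ⟩ := exists_eval_eq_zero_of_resultant_eq_zero natDegree_map_le
    (ne_zero_of_natDegree_gt (n := 0) (by omega)) hT
  rw [eval_map_Pmat] at hP
  rw [eval_sub, eval_C, eval_map_algebraMap, sub_eq_zero] at hQ
  exact ⟨x₀, hQ.symm, hP⟩

theorem hasEigenvalueRelation_or_isAlgebraic_of_natDegree_eq_zero (hr : 1 ≤ r) {a b : Ω} {k l : ℤ}
    (hab : a ^ k * b ^ l = 1) (hD : (matPolyEquiv.symm g).det.natDegree = 0)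
    (hT : MvPolynomial.eval₂Hom (algebraMap ℂ Ω) ![a, b] (Tres f g) = 0) :
    HasEigenvalueRelation f g k l ∨ IsAlgebraic ℂ a ∧ IsAlgebraic ℂ b := by
  have hb := eq_toClosure_of_eval_Tres_eq_zero f g hD hT
  rcases eq_or_ne k 0 with rfl | hk
  · have : Nonempty (Fin r) := ⟨⟨0, hr⟩⟩
    obtain ⟨μ, hμ⟩ := exists_det_smul_one_sub_eq_zero ((matPolyEquiv.symm f).map toClosure)
    exact Or.inl ⟨μ, hμ, by rw [zpow_zero, one_mul, ← hb]; simpa using hab⟩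
  · rw [eq_C_of_natDegree_eq_zero hD, toClosure_C] at hb
    have ha : a ^ k = algebraMap ℂ Ω ((matPolyEquiv.symm g).det.coeff 0 ^ l)⁻¹ := by
      rw [map_inv₀, map_zpow₀, ← hb]
      exact eq_inv_of_mul_eq_one_left hab
    exact Or.inr ⟨.of_zpow hk (ha ▸ isAlgebraic_algebraMap _), hb ▸ isAlgebraic_algebraMap _⟩

theorem hasEigenvalueRelation_or_isAlgebraic_of_natDegree_ne_zero {a b : Ω} {k l : ℤ}
    (hab : a ^ k * b ^ l = 1) (hD : (matPolyEquiv.symm g).det.natDegree ≠ 0)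
    (hT : MvPolynomial.eval₂Hom (algebraMap ℂ Ω) ![a, b] (Tres f g) = 0) :
    HasEigenvalueRelation f g k l ∨ IsAlgebraic ℂ a ∧ IsAlgebraic ℂ b := by
  obtain ⟨x₀, hb, ha⟩ := exists_root_of_eval_Tres_eq_zero f g hD hT
  by_cases hx₀ : Transcendental ℂ x₀
  · obtain ⟨σ, hσ⟩ := exists_ringHom_toClosure_eq_aeval hx₀
    have hmap : ((matPolyEquiv.symm f).map toClosure).map σ =
        (matPolyEquiv.symm f).map (aeval x₀) := by
      rw [Matrix.map_map]
      exact congrArg _ (funext hσ)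
    rw [det_smul_one_sub_eq_eval_charpoly, ← hmap] at ha
    obtain ⟨μ, hμ, rfl⟩ := exists_isRoot_charpoly_of_map σ _ ha
    refine Or.inl ⟨μ, by rwa [det_smul_one_sub_eq_eval_charpoly], σ.injective ?_⟩
    rwa [map_mul, map_zpow₀, map_zpow₀, hσ, hb, map_one]
  · obtain ⟨c, rfl⟩ : x₀ ∈ (algebraMap ℂ Ω).range := minpoly.mem_range_of_degree_eq_one ℂ x₀
      (IsAlgClosed.degree_eq_one_of_irreducible ℂ (minpoly.irreducible (not_not.mp hx₀).isIntegral))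
    have hF : (matPolyEquiv.symm f).map (aeval (algebraMap ℂ Ω c)) =
        ((matPolyEquiv.symm f).map (eval c)).map (algebraMap ℂ Ω) := by
      ext
      simp [aeval_algebraMap_apply_eq_algebraMap_eval]
    rw [hF, det_smul_one_sub_eq_eval_charpoly] at ha
    refine Or.inr ⟨(isIntegral_of_isRoot_charpoly_map _ ha).isAlgebraic, ?_⟩
    rw [← hb, aeval_algebraMap_apply_eq_algebraMap_eval]
    exact isAlgebraic_algebraMap _

theorem hasEigenvalueRelation_or_isAlgebraic_of_eval_Tres_eq_zero (hr : 1 ≤ r) {a b : Ω} {k l : ℤ}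
    (hab : a ^ k * b ^ l = 1)
    (hT : MvPolynomial.eval₂Hom (algebraMap ℂ Ω) ![a, b] (Tres f g) = 0) :
    HasEigenvalueRelation f g k l ∨ IsAlgebraic ℂ a ∧ IsAlgebraic ℂ b := by
  rcases eq_or_ne (matPolyEquiv.symm g).det.natDegree 0 with hD | hD
  · exact hasEigenvalueRelation_or_isAlgebraic_of_natDegree_eq_zero f g hr hab hD hT
  · exact hasEigenvalueRelation_or_isAlgebraic_of_natDegree_ne_zero f g hab hD hT

theorem not_dvd_Tres (hr : 1 ≤ r)
    (hindep : ∀ k l : ℤ, (k, l) ≠ (0, 0) → ¬HasEigenvalueRelation f g k l)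
    {Φ : MvPolynomial (Fin 2) ℂ} {i : ℕ} {J : ℤ} (hiJ : i ≠ 0 ∨ J ≠ 0) {ρ : ℂ} {k : ℕ}
    (hk : k ≠ 0) (hρ : ρ ^ k = 1)
    (hΦ : ∀ a b : Ω, b ≠ 0 → a ^ i * b ^ J = algebraMap ℂ Ω ρ →
      MvPolynomial.eval₂Hom (algebraMap ℂ Ω) ![a, b] Φ = 0) :
    ¬Φ ∣ Tres f g := by
  rintro ⟨Ψ, hΨ⟩
  have hρ0 : algebraMap ℂ Ω ρ ≠ 0 := by
    rintro h
    rw [(map_eq_zero _).mp h, zero_pow hk] at hρ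
    exact zero_ne_one hρ
  obtain ⟨a, b, hb, htr, hab⟩ := exists_pow_mul_zpow_eq transcendental_toClosure_X hiJ hρ0
  have hrel : a ^ ((i : ℤ) * k) * b ^ (J * k) = 1 := by
    rw [_root_.zpow_mul, _root_.zpow_mul, ← mul_zpow, zpow_natCast a i, hab, zpow_natCast,
      ← map_pow, hρ, map_one]
  have hT : MvPolynomial.eval₂Hom (algebraMap ℂ Ω) ![a, b] (Tres f g) = 0 := by
    rw [hΨ, map_mul, hΦ a b hb hab, zero_mul]
  rcases hasEigenvalueRelation_or_isAlgebraic_of_eval_Tres_eq_zero f g hr hrel hT with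
    hμ | ⟨ha, hb⟩
  · exact hindep _ _ (by simpa [hk, imp_iff_not_or] using hiJ) hμ
  · exact htr.elim (· ha) (· hb)

end Tres

theorem statement6_general (r : ℕ) (hr : 1 ≤ r)
    (f g : Polynomial (Matrix (Fin r) (Fin r) ℂ))
    (hindep : ∀ μ : AlgebraicClosure (RatFunc ℂ),
      (μ • (1 : Matrix (Fin r) (Fin r) (AlgebraicClosure (RatFunc ℂ))) -
          (matPolyEquiv.symm f).map toClosure).det = 0 →
      ∀ k l : ℤ, (k, l) ≠ (0, 0) →
        μ ^ k * toClosure (matPolyEquiv.symm g).det ^ l ≠ 1) :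
    ∀ i j : ℕ, ¬(i = 0 ∧ j = 0) → ∀ ρ : ℂ, (∃ k : ℕ, 1 ≤ k ∧ ρ ^ k = 1) →
      ¬((MvPolynomial.X 0 : MvPolynomial (Fin 2) ℂ) ^ i * MvPolynomial.X 1 ^ j -
          MvPolynomial.C ρ ∣ Tres f g) ∧
      ¬((MvPolynomial.X 0 : MvPolynomial (Fin 2) ℂ) ^ i -
          MvPolynomial.C ρ * MvPolynomial.X 1 ^ j ∣ Tres f g) := by
  rintro i j hij ρ ⟨k, hk, hρ⟩
  have hindep' k l hkl : ¬HasEigenvalueRelation f g k l := fun ⟨μ, hμ, hrel⟩ =>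
    hindep μ hμ k l hkl hrel
  constructor
  · refine not_dvd_Tres f g hr hindep' (i := i) (J := j) (by omega) (by omega) hρ
      fun a b _ hab => ?_
    simp [← hab]
  · refine not_dvd_Tres f g hr hindep' (i := i) (J := -j) (by omega) (by omega) hρ
      fun a b hb hab => ?_
    simp [← hab, hb]

/-- **Lemma 2.1(ii).** If every eigenvalue of `f(xI)`, as an element of an
algebraic closure of `ℂ(x)`, is multiplicatively independent of `det(g(xI))`, then
`T_{f,g}(y₁, y₂)` has no factor of the form `y₁^i y₂^j − ρ` or `y₁^i − ρ y₂^j` with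
`i, j` nonnegative integers not both zero and `ρ` a root of unity. -/
theorem statement6 (r : ℕ) (hr : 1 ≤ r)
    (f g : Polynomial (Matrix (Fin r) (Fin r) ℂ))
    (hf : 1 ≤ f.natDegree) (hg : 1 ≤ g.natDegree)
    (hindep : ∀ μ : AlgebraicClosure (RatFunc ℂ),
      (μ • (1 : Matrix (Fin r) (Fin r) (AlgebraicClosure (RatFunc ℂ))) -
          (matPolyEquiv.symm f).map toClosure).det = 0 →
      ∀ k l : ℤ, (k, l) ≠ (0, 0) →
        μ ^ k * toClosure (matPolyEquiv.symm g).det ^ l ≠ 1) :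
    ∀ i j : ℕ, ¬(i = 0 ∧ j = 0) → ∀ ρ : ℂ, (∃ k : ℕ, 1 ≤ k ∧ ρ ^ k = 1) →
      ¬((MvPolynomial.X 0 : MvPolynomial (Fin 2) ℂ) ^ i * MvPolynomial.X 1 ^ j -
          MvPolynomial.C ρ ∣ Tres f g) ∧
      ¬((MvPolynomial.X 0 : MvPolynomial (Fin 2) ℂ) ^ i -
          MvPolynomial.C ρ * MvPolynomial.X 1 ^ j ∣ Tres f g) :=
  statement6_general r hr f g hindep
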